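/- If the minimum A–B edge cut σ_min of the connected graph Γ is unique, then the maximizer of the face number Ω̃({π_v}) = ∑_{(u,v)∈E} χ(π_u⁻¹ π_v) subject to the boundary conditions (id on the A side, N-cycle F on the B side) is unique, given by assigning id and F to the two components of Γ ∖ σ_min. -/

import Mathlib

/-!
Write `defect g = N - χ(g)`: it is the rank of `g - 1` acting on `ℚ^N`, hence subadditive,
so `|defect π_u - defect π_v| ≤ defect (π_u⁻¹ π_v)` along every edge, while the face number
is `N · |E|` minus the total edge defect. The level function `d = defect ∘ π` is `0` on `A`
and `N - 1 = defect F` (its maximum) on `B`, so for `1 ≤ t ≤ N - 1` the edges across which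
`d` passes level `t` form an `A`–`B` cut. By the coarea formula the total defect is at least
`(N - 1) |σ_min|`, which the cut labeling attains. In the equality case every level cut is a
minimum cut, hence `σ_min`, so `π` is constant across the edges off `σ_min`; as every vertex
of the connected graph is joined to `A` or `B` in `Γ ∖ σ_min`, this forces `π` to be the cut
labeling.
-/

def numCycles {N : ℕ} (π : Equiv.Perm (Fin N)) : ℕ :=
  N - π.cycleType.sum + Multiset.card π.cycleType

/-- The face count `χ(π_u⁻¹ π_v)` of an unordered edge `{u, v}`. -/
def numCyclesLift {N : ℕ} {V : Type*} (π : V → Equiv.Perm (Fin N)) : Sym2 V → ℕ :=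
  Sym2.lift ⟨fun u v => numCycles ((π u)⁻¹ * π v), fun u v => by
    have h : (π v)⁻¹ * π u = ((π u)⁻¹ * π v)⁻¹ := by group
    show numCycles ((π u)⁻¹ * π v) = numCycles ((π v)⁻¹ * π u)
    rw [numCycles, numCycles, h, Equiv.Perm.cycleType_inv]⟩

/-- `σ` is an `A`–`B` edge cut: a set of edges of `G` such that every walk from
`A` to `B` uses an edge of `σ`. -/
def IsEdgeCut {V : Type*} (G : SimpleGraph V) (A B : Set V)
    (σ : Finset (Sym2 V)) : Prop :=
  ↑σ ⊆ G.edgeSet ∧ ∀ a ∈ A, ∀ b ∈ B, ∀ w : G.Walk a b, ∃ e ∈ w.edges, e ∈ σ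

/-- `σ` is a minimum `A`–`B` edge cut. -/
def IsMinEdgeCut {V : Type*} (G : SimpleGraph V) (A B : Set V)
    (σ : Finset (Sym2 V)) : Prop :=
  IsEdgeCut G A B σ ∧ ∀ σ' : Finset (Sym2 V), IsEdgeCut G A B σ' → σ.card ≤ σ'.card

open scoped Classical in
/-- The labeling assigning `id` to vertices reachable from `A` after deleting the
cut edges `σ`, and `F` to all other vertices. -/
noncomputable def cutLabel {V : Type*} {N : ℕ} (G : SimpleGraph V)
    (σ : Finset (Sym2 V)) (A : Set V) (F : Equiv.Perm (Fin N)) :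
    V → Equiv.Perm (Fin N) :=
  fun v => if ∃ a ∈ A, (G.deleteEdges ↑σ).Reachable a v then 1 else F

open Module LinearMap

namespace Equiv.Perm

variable {α : Type*}

noncomputable def funLeftSubId (g : Perm α) : (α → ℚ) →ₗ[ℚ] (α → ℚ) :=
  funLeft ℚ ℚ g - LinearMap.id

noncomputable def defect (g : Perm α) : ℕ :=
  finrank ℚ (range g.funLeftSubId)

theorem defect_one : (1 : Perm α).defect = 0 := by
  have h : (1 : Perm α).funLeftSubId = 0 := by ext f x; simp [funLeftSubId]
  rw [defect, h, range_zero, finrank_bot]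

theorem mem_ker_funLeftSubId {g : Perm α} {f : α → ℚ} :
    f ∈ ker g.funLeftSubId ↔ ∀ x, f (g x) = f x := by
  simp only [funLeftSubId, mem_ker, LinearMap.sub_apply, funLeft_apply, id_apply, sub_eq_zero,
    funext_iff]

theorem SameCycle.apply_eq_of_mem_ker_funLeftSubId {g : Perm α} {f : α → ℚ}
    (hf : f ∈ ker g.funLeftSubId) {x y : α} (h : g.SameCycle x y) : f x = f y := by
  obtain ⟨i, rfl⟩ := h
  have hg : ∀ y, f (g y) = f y := mem_ker_funLeftSubId.1 hf
  have hinv : ∀ y, f (g⁻¹ y) = f y := fun y => by simpa using (hg (g⁻¹ y)).symm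
  induction i using Int.induction_on with
  | zero => rfl
  | succ k ih => rw [add_comm, zpow_add, zpow_one, mul_apply, hg, ih]
  | pred k ih => rw [sub_eq_neg_add, zpow_add, zpow_neg_one, mul_apply, hinv, ih]

noncomputable def kerLinSubIdEquiv (g : Perm α) :
    ker g.funLeftSubId ≃ₗ[ℚ] (Quotient (SameCycle.setoid g) → ℚ) where
  toFun f := Quotient.lift f.1 fun _ _ h => h.apply_eq_of_mem_ker_funLeftSubId f.2
  map_add' _ _ := by ext ⟨x⟩; rfl
  map_smul' _ _ := by ext ⟨x⟩; rfl
  invFun h := ⟨fun x => h ⟦x⟧, mem_ker_funLeftSubId.2 fun x =>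
    congrArg h (Quotient.sound (SameCycle.refl g x).apply_left)⟩
  left_inv _ := rfl
  right_inv _ := by ext ⟨x⟩; rfl

section

variable [Fintype α] [DecidableEq α]

noncomputable def quotientSameCycleEquiv (g : Perm α) :
    Quotient (SameCycle.setoid g) ≃ Function.fixedPoints g ⊕ g.cycleFactorsFinset := by
  refine Equiv.ofBijective (Quotient.lift (fun x => if h : g x = x then Sum.inl ⟨x, h⟩
      else Sum.inr ⟨g.cycleOf x, cycleOf_mem_cycleFactorsFinset_iff.2 (mem_support.2 h)⟩)
      fun x y (hxy : g.SameCycle x y) => ?_) ⟨?_, ?_⟩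
  · by_cases hx : g x = x
    · obtain rfl := hxy.eq_of_left hx
      rfl
    · have hy : g y ≠ y := fun hy => hx (hxy.apply_eq_self_iff.2 hy)
      simp only [dif_neg hx, dif_neg hy, hxy.cycleOf_eq]
  · rintro ⟨x⟩ ⟨y⟩ hxy
    refine Quotient.sound (show g.SameCycle x y from ?_)
    by_cases hx : g x = x <;> by_cases hy : g y = y <;>
      simp only [hx, hy, dif_pos, dif_neg, not_false_eq_true, reduceCtorEq,
        Sum.inl.injEq, Sum.inr.injEq, Subtype.mk.injEq] at hxy
    · obtain rfl : x = y := congrArg Subtype.val hxy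
      rfl
    · exact (sameCycle_iff_cycleOf_eq_of_mem_support (mem_support.2 hx)
        (mem_support.2 hy)).2 hxy
  · rintro (⟨x, hx⟩ | ⟨c, hc⟩)
    · exact ⟨⟦x⟧, dif_pos hx⟩
    · obtain ⟨x, hx⟩ := (mem_cycleFactorsFinset_iff.1 hc).1.nonempty_support
      have hgx : g x ≠ x := by
        rwa [← (mem_cycleFactorsFinset_iff.1 hc).2 x hx, ← mem_support]
      refine ⟨⟦x⟧, ?_⟩
      simp only [Quotient.lift_mk, dif_neg hgx, ← cycle_is_cycleOf hx hc]

theorem finrank_ker_funLeftSubId (g : Perm α) :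
    finrank ℚ (ker g.funLeftSubId) =
      Fintype.card (Function.fixedPoints g) + g.cycleFactorsFinset.card := by
  have : Fintype (Quotient (SameCycle.setoid g)) := Fintype.ofFinite _
  rw [(kerLinSubIdEquiv g).finrank_eq, finrank_pi, ← Nat.card_eq_fintype_card,
    Nat.card_congr (quotientSameCycleEquiv g), Nat.card_sum, Nat.card_eq_fintype_card,
    Nat.card_eq_fintype_card, Fintype.card_coe]

end

variable [Fintype α]

theorem defect_add_finrank_ker (g : Perm α) :
    g.defect + finrank ℚ (ker g.funLeftSubId) = Fintype.card α := by
  rw [defect, finrank_range_add_finrank_ker, finrank_fintype_fun_eq_card]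

theorem numCycles_add_defect {N : ℕ} (g : Perm (Fin N)) : numCycles g + g.defect = N := by
  have h := g.defect_add_finrank_ker
  have hsum := g.sum_cycleType_le
  have hcard : Multiset.card g.cycleType = g.cycleFactorsFinset.card := by
    rw [cycleType_def, Multiset.card_map]; rfl
  rw [finrank_ker_funLeftSubId, card_fixedPoints, Fintype.card_fin] at h
  rw [Fintype.card_fin] at hsum
  rw [numCycles, hcard]
  omega

theorem defect_inv (g : Perm α) : g⁻¹.defect = g.defect := by
  have hker : ker g⁻¹.funLeftSubId = ker g.funLeftSubId := by
    ext f
    simp only [mem_ker_funLeftSubId]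
    constructor <;> intro h x
    · simpa using (h (g x)).symm
    · simpa using (h (g⁻¹ x)).symm
  have h₁ := g.defect_add_finrank_ker
  have h₂ := g⁻¹.defect_add_finrank_ker
  rw [hker] at h₂
  omega

theorem defect_inv_mul_comm (g h : Perm α) : (g⁻¹ * h).defect = (h⁻¹ * g).defect := by
  rw [← defect_inv, mul_inv_rev, inv_inv]

theorem defect_mul_le (g h : Perm α) : (g * h).defect ≤ g.defect + h.defect := by
  have hsplit : ∀ f,
      (g * h).funLeftSubId f = h.funLeftSubId (funLeft ℚ ℚ g f) + g.funLeftSubId f := by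
    intro f
    simp only [funLeftSubId, LinearMap.sub_apply, id_apply]
    ext x
    simp only [Pi.add_apply, Pi.sub_apply, funLeft_apply, coe_mul, Function.comp_apply]
    ring
  have hrange : range (g * h).funLeftSubId ≤ range h.funLeftSubId ⊔ range g.funLeftSubId := by
    rintro _ ⟨f, rfl⟩
    rw [hsplit]
    exact Submodule.add_mem_sup (mem_range_self _ _) (mem_range_self _ _)
  calc (g * h).defect ≤ finrank ℚ ↥(range h.funLeftSubId ⊔ range g.funLeftSubId) :=
        Submodule.finrank_mono hrange
    _ ≤ h.defect + g.defect := Submodule.finrank_add_le_finrank_add_finrank _ _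
    _ = g.defect + h.defect := add_comm _ _

theorem defect_le_add_defect_inv_mul (g h : Perm α) :
    h.defect ≤ g.defect + (g⁻¹ * h).defect := by
  simpa using defect_mul_le g (g⁻¹ * h)

theorem eq_one_of_defect_eq_zero {g : Perm α} (hg : g.defect = 0) : g = 1 := by
  classical
  have hzero : g.funLeftSubId = 0 := range_eq_bot.1 (Submodule.finrank_eq_zero.1 hg)
  ext x
  have hmem : (Pi.single (g x) 1 : α → ℚ) ∈ ker g.funLeftSubId := by simp [hzero]
  have hfix := mem_ker_funLeftSubId.1 hmem x
  simpa [Pi.single_apply, eq_comm] using hfix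

theorem defect_lt_card [Nonempty α] (g : Perm α) : g.defect < Fintype.card α := by
  have hconst : (fun _ => 1 : α → ℚ) ∈ ker g.funLeftSubId :=
    mem_ker_funLeftSubId.2 fun _ => rfl
  have hpos : 0 < finrank ℚ (ker g.funLeftSubId) :=
    Module.finrank_pos_iff_exists_ne_zero.2 ⟨⟨_, hconst⟩, by simp [funext_iff]⟩
  have := g.defect_add_finrank_ker
  omega

theorem numCycles_eq_one_of_isCycle {N : ℕ} {F : Perm (Fin N)} (hc : F.IsCycle)
    (hs : F.support = Finset.univ) : numCycles F = 1 := by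
  simp [numCycles, hc.cycleType, hs]

theorem defect_le_of_numCycles_eq_one {N : ℕ} {F : Perm (Fin N)} (hF : numCycles F = 1)
    (g : Perm (Fin N)) : g.defect ≤ F.defect := by
  have hN := numCycles_add_defect F
  have : Nonempty (Fin N) := ⟨⟨0, by omega⟩⟩
  have := g.defect_lt_card
  rw [Fintype.card_fin] at this
  omega

end Equiv.Perm

open Equiv Perm SimpleGraph Finset

section EdgeCut

variable {V : Type*} {G : SimpleGraph V} {A B : Set V} {σ : Finset (Sym2 V)}

def cutSide (G : SimpleGraph V) (σ : Finset (Sym2 V)) (A : Set V) : Set V :=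
  {v | ∃ a ∈ A, (G.deleteEdges ↑σ).Reachable a v}

theorem mem_cutSide_of_mem {a : V} (ha : a ∈ A) : a ∈ cutSide G σ A := ⟨a, ha, .refl a⟩

theorem mem_cutSide_of_adj {x y : V} (hx : x ∈ cutSide G σ A) (hxy : G.Adj x y)
    (he : s(x, y) ∉ σ) : y ∈ cutSide G σ A := by
  obtain ⟨a, ha, hr⟩ := hx
  exact ⟨a, ha, hr.trans (deleteEdges_adj.2 ⟨hxy, he⟩).reachable⟩

theorem IsEdgeCut.symm (h : IsEdgeCut G A B σ) : IsEdgeCut G B A σ := by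
  refine ⟨h.1, fun b hb a ha w => ?_⟩
  obtain ⟨e, he, heσ⟩ := h.2 a ha b hb w.reverse
  exact ⟨e, by simpa using he, heσ⟩

theorem IsMinEdgeCut.symm (h : IsMinEdgeCut G A B σ) : IsMinEdgeCut G B A σ :=
  ⟨h.1.symm, fun σ' h' => h.2 σ' h'.symm⟩

theorem IsEdgeCut.not_reachable (h : IsEdgeCut G A B σ) {a b : V} (ha : a ∈ A) (hb : b ∈ B) :
    ¬(G.deleteEdges ↑σ).Reachable a b := by
  rintro ⟨w⟩
  obtain ⟨e, he, heσ⟩ := h.2 a ha b hb (w.mapLe (G.deleteEdges_le _))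
  rw [Walk.edges_mapLe_eq_edges] at he
  have := w.edges_subset_edgeSet he
  rw [edgeSet_deleteEdges] at this
  exact this.2 heσ

theorem IsEdgeCut.disjoint_cutSide (h : IsEdgeCut G A B σ) :
    Disjoint (cutSide G σ A) (cutSide G σ B) := by
  rw [Set.disjoint_left]
  rintro v ⟨a, ha, hav⟩ ⟨b, hb, hbv⟩
  exact h.not_reachable ha hb (hav.trans hbv.symm)

/-- If `e ∈ σ` did not leave the side of `A`, then `σ.erase e` would be a smaller cut. -/
theorem IsMinEdgeCut.exists_mem_cutSide (h : IsMinEdgeCut G A B σ) {e : Sym2 V} (he : e ∈ σ) :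
    ∃ x y, e = s(x, y) ∧ x ∈ cutSide G σ A ∧ y ∉ cutSide G σ A := by
  classical
  have hsub : ↑(σ.erase e) ⊆ G.edgeSet := (coe_subset.2 (σ.erase_subset e)).trans h.1.1
  have hnot : ¬IsEdgeCut G A B (σ.erase e) := fun hcut =>
    (card_erase_lt_of_mem he).not_ge (h.2 _ hcut)
  simp only [IsEdgeCut, hsub, true_and, not_forall, not_exists, not_and] at hnot
  obtain ⟨a, ha, b, hb, w, hw⟩ := hnot
  have hb' : b ∉ cutSide G σ A := fun ⟨a', ha', hr⟩ => h.1.not_reachable ha' hb hr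
  obtain ⟨d, hd, hfst, hsnd⟩ := w.exists_boundary_dart _ (mem_cutSide_of_mem ha) hb'
  have hdσ : d.edge ∈ σ := by_contra fun hn => hsnd (mem_cutSide_of_adj hfst d.adj hn)
  have hde : d.edge = e := by
    by_contra hne
    exact hw _ (w.edges_eq_map_darts ▸ List.mem_map_of_mem hd) (mem_erase.2 ⟨hne, hdσ⟩)
  exact ⟨d.fst, d.snd, hde.symm, hfst, hsnd⟩

theorem IsMinEdgeCut.exists_mem_cutSide_mem_cutSide (h : IsMinEdgeCut G A B σ) {e : Sym2 V}
    (he : e ∈ σ) : ∃ x y, e = s(x, y) ∧ x ∈ cutSide G σ A ∧ y ∈ cutSide G σ B := by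
  obtain ⟨x, y, rfl, hx, -⟩ := h.exists_mem_cutSide he
  obtain ⟨x', y', he', hx', -⟩ := h.symm.exists_mem_cutSide he
  refine ⟨x, y, rfl, hx, ?_⟩
  rcases Sym2.eq_iff.1 he' with ⟨rfl, -⟩ | ⟨-, rfl⟩
  · exact absurd hx' (h.1.disjoint_cutSide.notMem_of_mem_left hx)
  · exact hx'

theorem IsMinEdgeCut.mem_cutSide_or (h : IsMinEdgeCut G A B σ) (hconn : G.Connected)
    (hA : A.Nonempty) (v : V) : v ∈ cutSide G σ A ∨ v ∈ cutSide G σ B := by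
  obtain ⟨a, ha⟩ := hA
  obtain ⟨w⟩ := hconn.preconnected a v
  by_contra hv
  obtain ⟨d, -, hfst, hsnd⟩ :=
    w.exists_boundary_dart (cutSide G σ A ∪ cutSide G σ B) (Or.inl (mem_cutSide_of_mem ha)) hv
  apply hsnd
  by_cases hdσ : d.edge ∈ σ
  · obtain ⟨x, y, hxy, hx, hy⟩ := h.exists_mem_cutSide_mem_cutSide hdσ
    rcases Sym2.eq_iff.1 hxy with ⟨-, rfl⟩ | ⟨-, rfl⟩
    · exact Or.inr hy
    · exact Or.inl hx
  · rcases hfst with hf | hf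
    · exact Or.inl (mem_cutSide_of_adj hf d.adj hdσ)
    · exact Or.inr (mem_cutSide_of_adj hf d.adj hdσ)

variable {N : ℕ} {F : Perm (Fin N)}

theorem cutLabel_of_mem {v : V} (hv : v ∈ cutSide G σ A) : cutLabel G σ A F v = 1 := if_pos hv

theorem cutLabel_of_notMem {v : V} (hv : v ∉ cutSide G σ A) : cutLabel G σ A F v = F :=
  if_neg hv

theorem IsMinEdgeCut.eq_cutLabel_of_adj (h : IsMinEdgeCut G A B σ) (hconn : G.Connected)
    (hA : A.Nonempty) {f : V → Perm (Fin N)} (hfA : ∀ a ∈ A, f a = 1)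
    (hfB : ∀ b ∈ B, f b = F)
    (hadj : ∀ u v, G.Adj u v → s(u, v) ∉ σ → f u = f v) : f = cutLabel G σ A F := by
  have hreach : ∀ x y, (G.deleteEdges ↑σ).Reachable x y → f x = f y := by
    rintro x y ⟨w⟩
    by_contra hne
    obtain ⟨d, -, hfst, hsnd⟩ := w.exists_boundary_dart {z | f x = f z} rfl hne
    obtain ⟨hadjG, hdσ⟩ := deleteEdges_adj.1 d.adj
    exact hsnd (hfst.trans (hadj _ _ hadjG hdσ))
  funext v
  rcases h.mem_cutSide_or hconn hA v with ⟨a, ha, hav⟩ | ⟨b, hb, hbv⟩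
  · rw [cutLabel_of_mem ⟨a, ha, hav⟩, ← hfA a ha, hreach a v hav]
  · rw [cutLabel_of_notMem (h.1.disjoint_cutSide.notMem_of_mem_right ⟨b, hb, hbv⟩),
      ← hfB b hb, hreach b v hbv]

end EdgeCut

section LevelCut

variable {V : Type*} (G : SimpleGraph V) [Fintype V] [DecidableRel G.Adj]
  {A B : Set V} {σ : Finset (Sym2 V)} {d : V → ℕ} {D : ℕ}

def levelCut (d : V → ℕ) (t : ℕ) : Finset (Sym2 V) :=
  G.edgeFinset.filter fun e => (e.map d).inf < t ∧ t ≤ (e.map d).sup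

theorem mem_levelCut_mk {u v : V} {t : ℕ} :
    s(u, v) ∈ levelCut G d t ↔ G.Adj u v ∧ min (d u) (d v) < t ∧ t ≤ max (d u) (d v) := by
  simp [levelCut]

theorem isEdgeCut_levelCut {t : ℕ} (hA : ∀ a ∈ A, d a < t) (hB : ∀ b ∈ B, t ≤ d b) :
    IsEdgeCut G A B (levelCut G d t) := by
  refine ⟨fun e he => mem_edgeFinset.1 (mem_filter.1 he).1, fun a ha b hb w => ?_⟩
  obtain ⟨x, hx, hfst, hsnd⟩ :=
    w.exists_boundary_dart {v | d v < t} (hA a ha) (not_lt.2 (hB b hb))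
  refine ⟨x.edge, w.edges_eq_map_darts ▸ List.mem_map_of_mem hx, ?_⟩
  simp only [Set.mem_ofPred_eq, not_lt] at hfst hsnd
  exact (mem_levelCut_mk G).2 ⟨x.adj, by omega, by omega⟩

theorem isEdgeCut_levelCut_of_mem_Icc (hA : ∀ a ∈ A, d a = 0) (hB : ∀ b ∈ B, d b = D)
    {t : ℕ} (ht : t ∈ Icc 1 D) : IsEdgeCut G A B (levelCut G d t) :=
  isEdgeCut_levelCut G (fun a ha => by rw [hA a ha]; exact (mem_Icc.1 ht).1)
    (fun b hb => by rw [hB b hb]; exact (mem_Icc.1 ht).2)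

theorem sum_card_levelCut (hD : ∀ v, d v ≤ D) :
    ∑ t ∈ Icc 1 D, #(levelCut G d t) =
      ∑ e ∈ G.edgeFinset, ((e.map d).sup - (e.map d).inf) := by
  simp only [levelCut, card_filter]
  rw [sum_comm]
  refine sum_congr rfl fun e _ => ?_
  have hsup : (e.map d).sup ≤ D := by
    induction e using Sym2.ind with
    | _ u v => exact sup_le (hD u) (hD v)
  rw [← card_filter, ← Nat.card_Ioc]
  congr 1
  ext t
  simp only [mem_filter, mem_Icc, mem_Ioc]
  omega

variable {G}

theorem IsMinEdgeCut.card_mul_le_sum_sup_sub_inf (hσ : IsMinEdgeCut G A B σ)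
    (hA : ∀ a ∈ A, d a = 0) (hB : ∀ b ∈ B, d b = D) (hD : ∀ v, d v ≤ D) :
    D * #σ ≤ ∑ e ∈ G.edgeFinset, ((e.map d).sup - (e.map d).inf) := by
  rw [← sum_card_levelCut G hD]
  calc D * #σ = ∑ _t ∈ Icc 1 D, #σ := by simp
    _ ≤ _ := sum_le_sum fun t ht => hσ.2 _ (isEdgeCut_levelCut_of_mem_Icc G hA hB ht)

/-- In the equality case every level cut is a minimum cut, hence equal to `σ`, so `d` can only
jump across edges of `σ`. -/
theorem IsMinEdgeCut.eq_of_adj_of_sum_sup_sub_inf_eq (hσ : IsMinEdgeCut G A B σ)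
    (huniq : ∀ σ', IsMinEdgeCut G A B σ' → σ' = σ) (hA : ∀ a ∈ A, d a = 0)
    (hB : ∀ b ∈ B, d b = D) (hD : ∀ v, d v ≤ D)
    (heq : ∑ e ∈ G.edgeFinset, ((e.map d).sup - (e.map d).inf) = D * #σ)
    {u v : V} (huv : G.Adj u v) (hnot : s(u, v) ∉ σ) : d u = d v := by
  have hcut : ∀ t ∈ Icc 1 D, IsEdgeCut G A B (levelCut G d t) := fun t ht =>
    isEdgeCut_levelCut_of_mem_Icc G hA hB ht
  have hcard : ∀ t ∈ Icc 1 D, #σ = #(levelCut G d t) := by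
    refine (sum_eq_sum_iff_of_le fun t ht => hσ.2 _ (hcut t ht)).1 ?_
    rw [sum_card_levelCut G hD, heq, sum_const, Nat.card_Icc, smul_eq_mul,
      add_tsub_cancel_right]
  by_contra hne
  have ht : min (d u) (d v) + 1 ∈ Icc 1 D := by
    have := hD u; have := hD v
    rw [mem_Icc]; omega
  have hmin : IsMinEdgeCut G A B (levelCut G d (min (d u) (d v) + 1)) :=
    ⟨hcut _ ht, fun σ' h' => hcard _ ht ▸ hσ.2 σ' h'⟩
  exact hnot (huniq _ hmin ▸ (mem_levelCut_mk G).2 ⟨huv, by omega, by omega⟩)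

end LevelCut

section FaceNumber

variable {V α : Type*}

noncomputable def edgeDefect [Fintype α] (π : V → Perm α) : Sym2 V → ℕ :=
  Sym2.lift ⟨fun u v => ((π u)⁻¹ * π v).defect, fun _ _ => defect_inv_mul_comm _ _⟩

@[simp]
theorem edgeDefect_mk [Fintype α] (π : V → Perm α) (u v : V) :
    edgeDefect π s(u, v) = ((π u)⁻¹ * π v).defect :=
  rfl

theorem sup_sub_inf_le_edgeDefect [Fintype α] (π : V → Perm α) (e : Sym2 V) :
    (e.map (defect ∘ π)).sup - (e.map (defect ∘ π)).inf ≤ edgeDefect π e := by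
  induction e using Sym2.ind with
  | _ u v =>
    have h₁ := defect_le_add_defect_inv_mul (π u) (π v)
    have h₂ := defect_le_add_defect_inv_mul (π v) (π u)
    rw [defect_inv_mul_comm] at h₂
    simp only [Sym2.map_mk, Sym2.sup_mk, Sym2.inf_mk, edgeDefect_mk, Function.comp_apply]
    omega

theorem sum_numCyclesLift_add_sum_edgeDefect {N : ℕ} (π : V → Perm (Fin N))
    (s : Finset (Sym2 V)) :
    ∑ e ∈ s, numCyclesLift π e + ∑ e ∈ s, edgeDefect π e = N * #s := by
  rw [← sum_add_distrib, sum_congr rfl fun e _ => ?_, sum_const, smul_eq_mul, mul_comm]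
  induction e using Sym2.ind with
  | _ u v => exact numCycles_add_defect _

theorem IsMinEdgeCut.sum_edgeDefect_cutLabel [Fintype V] {G : SimpleGraph V}
    [DecidableRel G.Adj] {A B : Set V} {σ : Finset (Sym2 V)} (hσ : IsMinEdgeCut G A B σ)
    {N : ℕ} (F : Perm (Fin N)) :
    ∑ e ∈ G.edgeFinset, edgeDefect (cutLabel G σ A F) e = F.defect * #σ := by
  classical
  have hedge : ∀ e ∈ G.edgeFinset,
      edgeDefect (cutLabel G σ A F) e = if e ∈ σ then F.defect else 0 := by
    intro e he
    split_ifs with heσ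
    · obtain ⟨x, y, rfl, hx, hy⟩ := hσ.exists_mem_cutSide heσ
      rw [edgeDefect_mk, cutLabel_of_mem hx, cutLabel_of_notMem hy, inv_one, one_mul]
    · induction e using Sym2.ind with
      | _ u v =>
        have huv : G.Adj u v := mem_edgeFinset.1 he
        have hside : u ∈ cutSide G σ A ↔ v ∈ cutSide G σ A :=
          ⟨fun hu => mem_cutSide_of_adj hu huv heσ,
            fun hv => mem_cutSide_of_adj hv huv.symm (Sym2.eq_swap ▸ heσ)⟩
        have hlabel : cutLabel G σ A F u = cutLabel G σ A F v := by
          by_cases hu : u ∈ cutSide G σ A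
          · rw [cutLabel_of_mem hu, cutLabel_of_mem (hside.1 hu)]
          · rw [cutLabel_of_notMem hu, cutLabel_of_notMem (mt hside.2 hu)]
        rw [edgeDefect_mk, hlabel, inv_mul_cancel, defect_one]
  rw [sum_congr rfl hedge, sum_ite_mem, sum_const, smul_eq_mul, mul_comm,
    inter_eq_right.2 fun e he => mem_edgeFinset.2 (hσ.1.1 he)]

end FaceNumber

theorem faceNumber_max_unique_general {V : Type*} [Fintype V]
    (G : SimpleGraph V) [DecidableRel G.Adj] (hconn : G.Connected)
    (A B : Set V) (hA : A.Nonempty)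
    (N : ℕ) (F : Equiv.Perm (Fin N))
    (hF : F.IsCycle ∧ F.support = Finset.univ)
    (σmin : Finset (Sym2 V)) (hσ : IsMinEdgeCut G A B σmin)
    (huniq : ∀ σ' : Finset (Sym2 V), IsMinEdgeCut G A B σ' → σ' = σmin) :
    ∀ π : V → Equiv.Perm (Fin N),
      (∀ v ∈ A, π v = 1) → (∀ v ∈ B, π v = F) →
      π ≠ cutLabel G σmin A F →
      ∑ e ∈ G.edgeFinset, numCyclesLift π e
        < ∑ e ∈ G.edgeFinset, numCyclesLift (cutLabel G σmin A F) e := by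
  intro π hπA hπB hne
  set d : V → ℕ := defect ∘ π
  have hdA : ∀ a ∈ A, d a = 0 := fun a ha => by simp [d, hπA a ha, defect_one]
  have hdB : ∀ b ∈ B, d b = F.defect := fun b hb => by simp [d, hπB b hb]
  have hdF : ∀ v, d v ≤ F.defect := fun v =>
    defect_le_of_numCycles_eq_one (numCycles_eq_one_of_isCycle hF.1 hF.2) (π v)
  suffices hlt : F.defect * #σmin < ∑ e ∈ G.edgeFinset, edgeDefect π e by
    have := sum_numCyclesLift_add_sum_edgeDefect π G.edgeFinset
    have := sum_numCyclesLift_add_sum_edgeDefect (cutLabel G σmin A F) G.edgeFinset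
    have := hσ.sum_edgeDefect_cutLabel F
    omega
  have hvar : ∀ e ∈ G.edgeFinset, (e.map d).sup - (e.map d).inf ≤ edgeDefect π e :=
    fun e _ => sup_sub_inf_le_edgeDefect π e
  have hle := hσ.card_mul_le_sum_sup_sub_inf hdA hdB hdF
  have hsum := sum_le_sum hvar
  refine lt_of_le_of_ne (hle.trans hsum) fun heq => hne ?_
  refine hσ.eq_cutLabel_of_adj hconn hA hπA hπB fun u v huv hnot => ?_
  have hedge :=
    (sum_eq_sum_iff_of_le hvar).1 (by omega) _ (mem_edgeFinset.2 (G.mem_edgeSet.2 huv))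
  have hduv : d u = d v :=
    hσ.eq_of_adj_of_sum_sup_sub_inf_eq huniq hdA hdB hdF (by omega) huv hnot
  have hzero : edgeDefect π s(u, v) = 0 := by
    rw [← hedge]
    simp [hduv]
  exact inv_mul_eq_one.1 (eq_one_of_defect_eq_zero hzero)

/-- if the minimum `A`–`B` edge cut `σ_min` of the connected graph
is unique, then the maximizer of the face number
`Ω̃({π_v}) = ∑_{(u,v)∈E} χ(π_u⁻¹π_v)` subject to the boundary conditions (`id`
on the `A` side, the `N`-cycle `F` on the `B` side) is unique, given by assigning
`id` and `F` to the two components of `Γ ∖ σ_min`: any other admissible labeling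
has strictly smaller face number. -/
theorem faceNumber_max_unique {V : Type*} [Fintype V] [DecidableEq V]
    (G : SimpleGraph V) [DecidableRel G.Adj] (hconn : G.Connected)
    (A B : Set V) (hdisj : Disjoint A B) (hA : A.Nonempty) (hB : B.Nonempty)
    (N : ℕ) (hN : 2 ≤ N) (F : Equiv.Perm (Fin N))
    (hF : F.IsCycle ∧ F.support = Finset.univ)
    (σmin : Finset (Sym2 V)) (hσ : IsMinEdgeCut G A B σmin)
    (huniq : ∀ σ' : Finset (Sym2 V), IsMinEdgeCut G A B σ' → σ' = σmin) :
    ∀ π : V → Equiv.Perm (Fin N),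
      (∀ v ∈ A, π v = 1) → (∀ v ∈ B, π v = F) →
      π ≠ cutLabel G σmin A F →
      ∑ e ∈ G.edgeFinset, numCyclesLift π e
        < ∑ e ∈ G.edgeFinset, numCyclesLift (cutLabel G σmin A F) e :=
  faceNumber_max_unique_general G hconn A B hA N F hF σmin hσ huniq
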